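/- The finite simple graph G on six vertices {c, l_1, l_2, l_3, u, v}, whose edges are exactly c l_1, c l_2, c l_3 (a star K_{1,3} with center c), together with all edges from u to each of c, l_1, l_2, l_3 and all edges from v to each of c, l_1, l_2, l_3 (and with u,v non-adjacent and l_1,l_2,l_3 pairwise non-adjacent), is not a central-max-point tolerance graph (CMPTG). -/

import Mathlib

variable {V : Type*}

/-- An MPT representation of a simple graph: each vertex `u` gets an interval
`[a u, b u]` with a point `p u` inside it, and distinct vertices `u, v` are adjacent
iff both `p u` and `p v` lie in the intersection of the two intervals. -/
def IsMPTRep (G : SimpleGraph V) (a b p : V → ℝ) : Prop :=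
  (∀ u, a u ≤ b u) ∧ (∀ u, p u ∈ Set.Icc (a u) (b u)) ∧
    ∀ u v : V, u ≠ v →
      (G.Adj u v ↔ p u ∈ Set.Icc (a u) (b u) ∩ Set.Icc (a v) (b v) ∧
                   p v ∈ Set.Icc (a u) (b u) ∩ Set.Icc (a v) (b v))

/-- A central-max-point tolerance graph: an MPT representation where every point is
the center of its interval. -/
def IsCMPTG (G : SimpleGraph V) : Prop :=
  ∃ a b : V → ℝ, IsMPTRep G a b (fun u => (a u + b u) / 2)

/-- The graph on six vertices `0 = c`, `1 = l₁`, `2 = l₂`, `3 = l₃`, `4 = u`, `5 = v`: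
a star `K_{1,3}` with center `c` and leaves `l₁, l₂, l₃`, together with two
non-adjacent vertices `u, v` each adjacent to all of `c, l₁, l₂, l₃`. -/
def starPlusTwo : SimpleGraph (Fin 6) where
  Adj i j := i ≠ j ∧ ¬((i = 1 ∨ i = 2 ∨ i = 3) ∧ (j = 1 ∨ j = 2 ∨ j = 3)) ∧
    ¬((i = 4 ∨ i = 5) ∧ (j = 4 ∨ j = 5))
  symm := ⟨by
    rintro i j ⟨h1, h2, h3⟩
    exact ⟨h1.symm, fun h => h2 ⟨h.2, h.1⟩, fun h => h3 ⟨h.2, h.1⟩⟩⟩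
  loopless := ⟨fun i h => h.1 rfl⟩

/-! Since `c` is adjacent to every other vertex, `u`, `v` and the leaves induce `K_{2,3}`, and it
suffices to show that `K_{2,3}` is not a CMPTG. In a central representation the non-adjacent
`u`, `v` have, say, the centre `q` of `v` outside `I_u`. Every leaf interval contains `q` and the
centre `m` of `I_u`, and has its centre in `I_u`; an interval of this kind whose centre lies on
the same side of `m` as a point `x ∈ I_u` contains `x`. Two of the three leaves have centres on
the same side of `m`, so they would be adjacent. -/

open Set Function

/- If `q ≥ b`, either `x ∈ [(a + b) / 2, q]`, or the centre of `[c, d]` is at most `(a + b) / 2`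
and reflecting `q` through it gives `c ≤ a`; symmetrically if `q ≤ a`. -/
theorem mem_Icc_of_le_iff_le {a b c d q x : ℝ} (hx : x ∈ Icc a b) (hq : q ∉ Ioo a b)
    (hm : (a + b) / 2 ∈ Icc c d) (hqcd : q ∈ Icc c d)
    (hside : (a + b) / 2 ≤ x ↔ (a + b) / 2 ≤ (c + d) / 2) : x ∈ Icc c d := by
  obtain ⟨hax, hxb⟩ := hx
  obtain ⟨hcm, hmd⟩ := hm
  obtain ⟨hcq, hqd⟩ := hqcd
  rw [mem_Ioo, not_and_or, not_lt, not_lt] at hq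
  by_cases hmx : (a + b) / 2 ≤ x
  · have := hside.1 hmx
    rcases hq with hq | hq <;> constructor <;> linarith
  · have := not_le.1 (hside.not.1 hmx)
    rcases hq with hq | hq <;> constructor <;> linarith

section

variable {W : Type*} {G : SimpleGraph V} {H : SimpleGraph W} {a b p : V → ℝ}

theorem IsMPTRep.adj_iff (h : IsMPTRep G a b p) {u v : V} (huv : u ≠ v) :
    G.Adj u v ↔ p u ∈ Icc (a v) (b v) ∧ p v ∈ Icc (a u) (b u) := by
  have hu := h.2.1 u
  have hv := h.2.1 v
  rw [h.2.2 u v huv, mem_inter_iff, mem_inter_iff]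
  tauto

theorem IsMPTRep.comap (h : IsMPTRep G a b p) (f : H ↪g G) :
    IsMPTRep H (a ∘ f) (b ∘ f) (p ∘ f) :=
  ⟨fun u => h.1 (f u), fun u => h.2.1 (f u), fun u v huv => by
    simpa only [comp_apply, f.map_adj_iff] using h.2.2 (f u) (f v) (f.injective.ne huv)⟩

theorem IsCMPTG.comap (hG : IsCMPTG G) (f : H ↪g G) : IsCMPTG H :=
  let ⟨a, b, h⟩ := hG
  ⟨a ∘ f, b ∘ f, h.comap f⟩

theorem IsMPTRep.adj_of_le_iff_le (h : IsMPTRep G a b fun u => (a u + b u) / 2) {u w i j : V}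
    (hw : (a w + b w) / 2 ∉ Ioo (a u) (b u)) (hij : i ≠ j) (hui : G.Adj u i) (huj : G.Adj u j)
    (hwi : G.Adj w i) (hwj : G.Adj w j)
    (hside : (a u + b u) / 2 ≤ (a i + b i) / 2 ↔ (a u + b u) / 2 ≤ (a j + b j) / 2) :
    G.Adj i j := by
  obtain ⟨hui, hiu⟩ := (h.adj_iff hui.ne).1 hui
  obtain ⟨huj, hju⟩ := (h.adj_iff huj.ne).1 huj
  have hwi := ((h.adj_iff hwi.ne).1 hwi).1
  have hwj := ((h.adj_iff hwj.ne).1 hwj).1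
  exact (h.adj_iff hij).2
    ⟨mem_Icc_of_le_iff_le hiu hw huj hwj hside, mem_Icc_of_le_iff_le hju hw hui hwi hside.symm⟩

theorem IsMPTRep.exists_adj_of_card_lt (h : IsMPTRep G a b fun u => (a u + b u) / 2) {u w : V}
    (hw : (a w + b w) / 2 ∉ Ioo (a u) (b u)) {ι : Type*} [Fintype ι] (hι : 2 < Fintype.card ι)
    (l : ι ↪ V) (hu : ∀ k, G.Adj u (l k)) (hw' : ∀ k, G.Adj w (l k)) :
    ∃ k k', k ≠ k' ∧ G.Adj (l k) (l k') := by
  obtain ⟨k, k', hkk', hside⟩ := Fintype.exists_ne_map_eq_of_card_lt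
    (fun k => (a u + b u) / 2 ≤ (a (l k) + b (l k)) / 2) (by rwa [Fintype.card_prop])
  exact ⟨k, k', hkk', h.adj_of_le_iff_le hw (l.injective.ne hkk') (hu k) (hu k') (hw' k) (hw' k')
    (Iff.of_eq hside)⟩

end

theorem not_isCMPTG_completeBipartiteGraph_two_three :
    ¬ IsCMPTG (completeBipartiteGraph (Fin 2) (Fin 3)) := by
  rintro ⟨a, b, h⟩
  have hcentre_mem : ∀ u w : Fin 2,
      (a (.inl w) + b (.inl w)) / 2 ∈ Icc (a (.inl u)) (b (.inl u)) := by
    intro u w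
    by_contra hw
    obtain ⟨k, k', -, hkk'⟩ := h.exists_adj_of_card_lt (fun hmem => hw (Ioo_subset_Icc_self hmem))
      (by simp) .inr (by simp) (by simp)
    simp at hkk'
  exact (h.adj_iff (by simp)).not.1 (by simp) ⟨hcentre_mem 1 0, hcentre_mem 0 1⟩

def completeBipartiteEmbeddingStarPlusTwo :
    completeBipartiteGraph (Fin 2) (Fin 3) ↪g starPlusTwo where
  toFun := Sum.elim ![4, 5] ![1, 2, 3]
  inj' := by decide
  map_rel_iff' := by
    simp only [starPlusTwo, completeBipartiteGraph_adj]
    decide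

/-- The graph obtained from `K_{1,3}` by adding two non-adjacent vertices adjacent to
every vertex of the star is not a CMPTG. -/
theorem starPlusTwo_not_cmptg : ¬ IsCMPTG starPlusTwo := fun h =>
  not_isCMPTG_completeBipartiteGraph_two_three (h.comap completeBipartiteEmbeddingStarPlusTwo)
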